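/- arXiv:2005.09369 — 4 statements merged into one kernel-verified Lean document; each statement's English description precedes it below -/
import Mathlib

section
/- Let λ > 0 and μ ∈ ℝ. There exists a continuous function u : [0,1] → ℝ, not identically zero, such that u − λ·Ku = μ·u (pointwise on [0,1]) if and only if μ = 1 − λ/(nπ)² for some integer n ≥ 1. -/
/-!
Differentiating twice, `v = K u` solves `-v'' = u` with `v 0 = v 1 = 0`. For an eigenfunction
`u = β v` with `β = λ / (1 - μ)` (the case `μ = 1` would give `v = 0`, hence `u = -v'' = 0`), so
`v'' = -β v` with Dirichlet boundary conditions and `v ≠ 0`. If `β ≤ 0`, then `(v v')' = v'² - β v²`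
is nonnegative while `v v'` vanishes at both ends, which forces `v = 0`. If `β > 0`, conservation of
`v'² + β v²` makes `v` a multiple of `sin (√β x)`, and `v 1 = 0` gives `√β = n π`. Conversely
`K sin (n π ·) = sin (n π ·) / (n π)²`, by the same uniqueness argument with `β = 0`.
-/

open Set

noncomputable def Kop (f : ℝ → ℝ) (x : ℝ) : ℝ :=
  (∫ s in (0:ℝ)..x, (s - x) * f s) - x * ∫ s in (0:ℝ)..1, (s - 1) * f s

open Filter Topology Real

lemma HasDerivAt.eq_zero_of_eqOn_zero {𝕜 F : Type*} [NontriviallyNormedField 𝕜]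
    [NormedAddCommGroup F] [NormedSpace 𝕜 F] {f : 𝕜 → F} {f' : F} {x : 𝕜} {s : Set 𝕜}
    (hf : HasDerivAt f f' x) (hs : s ∈ 𝓝 x) (h : EqOn f 0 s) : f' = 0 :=
  hf.unique ((hasDerivAt_const x 0).congr_of_eventuallyEq (eventuallyEq_of_mem hs h))

lemma eqOn_zero_of_hasDerivAt_nonneg {f f' : ℝ → ℝ} {a b : ℝ}
    (hf : ∀ x ∈ Icc a b, HasDerivAt f (f' x) x) (hf' : ∀ x ∈ Ioo a b, 0 ≤ f' x)
    (ha : f a = 0) (hb : f b = 0) : EqOn f 0 (Icc a b) := by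
  have hmono : MonotoneOn f (Icc a b) :=
    monotoneOn_of_hasDerivWithinAt_nonneg (convex_Icc a b)
      (fun x hx => (hf x hx).continuousAt.continuousWithinAt)
      (fun x hx => (hf x (interior_subset hx)).hasDerivWithinAt)
      (by simpa only [interior_Icc] using hf')
  intro x hx
  have hab : a ≤ b := hx.1.trans hx.2
  have hax := hmono (left_mem_Icc.2 hab) hx hx.1
  have hxb := hmono hx (right_mem_Icc.2 hab) hx.2
  simp only [Pi.zero_apply]
  linarith

section SecondOrder

variable {v v' : ℝ → ℝ} {β a b : ℝ}

lemma eqOn_zero_of_dirichlet_of_nonpos (hβ : β ≤ 0)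
    (hv : ∀ x ∈ Icc a b, HasDerivAt v (v' x) x) (hv' : ∀ x ∈ Icc a b, HasDerivAt v' (-β * v x) x)
    (ha : v a = 0) (hb : v b = 0) : EqOn v 0 (Icc a b) := by
  have hq : ∀ x ∈ Icc a b,
      HasDerivAt (fun x => v x * v' x) (v' x * v' x + v x * (-β * v x)) x :=
    fun x hx => (hv x hx).mul (hv' x hx)
  have hq0 : EqOn (fun x => v x * v' x) 0 (Icc a b) :=
    eqOn_zero_of_hasDerivAt_nonneg hq
      (fun x _ => by nlinarith [mul_self_nonneg (v' x), mul_self_nonneg (v x)])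
      (by simp [ha]) (by simp [hb])
  have hv'0 : ∀ x ∈ Ioo a b, v' x = 0 := fun x hx => by
    have := (hq x (Ioo_subset_Icc_self hx)).eq_zero_of_eqOn_zero (Icc_mem_nhds hx.1 hx.2) hq0
    nlinarith [mul_self_nonneg (v' x), mul_self_nonneg (v x)]
  exact eqOn_zero_of_hasDerivAt_nonneg hv (fun x hx => (hv'0 x hx).ge) ha hb

lemma eqOn_zero_of_initial_of_pos (hβ : 0 < β)
    (hv : ∀ x ∈ Icc a b, HasDerivAt v (v' x) x) (hv' : ∀ x ∈ Icc a b, HasDerivAt v' (-β * v x) x)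
    (ha : v a = 0) (ha' : v' a = 0) : EqOn v 0 (Icc a b) := by
  set E : ℝ → ℝ := fun x => v' x * v' x + β * (v x * v x)
  have hE : ∀ x ∈ Icc a b, HasDerivAt E 0 x := fun x hx =>
    (((hv' x hx).mul (hv' x hx)).add (((hv x hx).mul (hv x hx)).const_mul β)).congr_deriv
      (by ring)
  have hEc := constant_of_has_deriv_right_zero
    (fun x hx => (hE x hx).continuousAt.continuousWithinAt)
    (fun x hx => (hE x (Ico_subset_Icc_self hx)).hasDerivWithinAt)
  intro x hx
  have := hEc x hx
  simp only [E, ha, ha', mul_zero, add_zero] at this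
  have hvx : v x * v x = 0 := by nlinarith [mul_self_nonneg (v' x), mul_self_nonneg (v x)]
  exact mul_self_eq_zero.1 hvx

end SecondOrder

lemma hasDerivAt_sin_mul (ω x : ℝ) : HasDerivAt (fun x => sin (ω * x)) (ω * cos (ω * x)) x := by
  simpa [mul_comm] using ((hasDerivAt_id x).const_mul ω).sin

lemma hasDerivAt_cos_mul (ω x : ℝ) : HasDerivAt (fun x => cos (ω * x)) (-(ω * sin (ω * x))) x := by
  simpa [mul_comm] using ((hasDerivAt_id x).const_mul ω).cos

lemma exists_eq_sq_mul_pi_sq_of_dirichlet {v v' : ℝ → ℝ} {β : ℝ}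
    (hv : ∀ x ∈ Icc (0:ℝ) 1, HasDerivAt v (v' x) x)
    (hv' : ∀ x ∈ Icc (0:ℝ) 1, HasDerivAt v' (-β * v x) x) (h0 : v 0 = 0) (h1 : v 1 = 0)
    (hne : ∃ x ∈ Icc (0:ℝ) 1, v x ≠ 0) : ∃ n : ℕ, 1 ≤ n ∧ β = (n * π) ^ 2 := by
  obtain ⟨x₀, hx₀, hvx₀⟩ := hne
  rcases le_or_gt β 0 with hβ | hβ
  · exact absurd (eqOn_zero_of_dirichlet_of_nonpos hβ hv hv' h0 h1 hx₀) hvx₀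
  set ω := √β
  have hω : 0 < ω := sqrt_pos.2 hβ
  have hωβ : ω ^ 2 = β := sq_sqrt hβ.le
  set c := v' 0 / ω
  have hsin : EqOn v (fun x => c * sin (ω * x)) (Icc 0 1) := by
    have hd := eqOn_zero_of_initial_of_pos hβ
      (v := fun x => v x - c * sin (ω * x)) (v' := fun x => v' x - c * ω * cos (ω * x))
      (fun x hx => ((hv x hx).sub ((hasDerivAt_sin_mul ω x).const_mul c)).congr_deriv (by ring))
      (fun x hx => ((hv' x hx).sub ((hasDerivAt_cos_mul ω x).const_mul (c * ω))).congr_deriv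
        (by rw [← hωβ]; ring))
      (by simp [h0]) (by simp [c, hω.ne'])
    intro x hx
    simpa [sub_eq_zero] using hd hx
  have hc : c ≠ 0 := fun hc => hvx₀ (by simpa [hc] using hsin hx₀)
  have hsinω : sin ω = 0 := by
    simpa [h1, hc] using (hsin (right_mem_Icc.2 zero_le_one)).symm
  obtain ⟨n, hn⟩ := sin_eq_zero_iff.1 hsinω
  have hn0 : 0 < n := by
    have : (0:ℝ) < n * π := hn ▸ hω
    exact_mod_cast pos_of_mul_pos_left this pi_pos.le
  lift n to ℕ using hn0.le
  exact ⟨n, by omega, by rw [← hωβ, ← hn]; norm_cast⟩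

noncomputable def KopDeriv (f : ℝ → ℝ) (x : ℝ) : ℝ :=
  -(∫ s in (0:ℝ)..x, f s) - ∫ s in (0:ℝ)..1, (s - 1) * f s

lemma Kop_apply_zero (f : ℝ → ℝ) : Kop f 0 = 0 := by
  simp [Kop]

lemma Kop_apply_one (f : ℝ → ℝ) : Kop f 1 = 0 := by
  simp [Kop]

lemma Kop_congr {f g : ℝ → ℝ} (h : EqOn f g (Icc 0 1)) {x : ℝ} (hx : x ∈ Icc (0:ℝ) 1) :
    Kop f x = Kop g x := by
  have hsub : ∀ {y}, y ∈ Icc (0:ℝ) 1 → uIcc 0 y ⊆ Icc 0 1 := fun hy => by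
    rw [uIcc_of_le hy.1]; exact Icc_subset_Icc_right hy.2
  unfold Kop
  rw [intervalIntegral.integral_congr fun s hs => congrArg ((s - x) * ·) (h (hsub hx hs)),
    intervalIntegral.integral_congr fun s hs =>
      congrArg ((s - 1) * ·) (h (hsub (right_mem_Icc.2 zero_le_one) hs))]

section Continuous

variable {w : ℝ → ℝ}

lemma Kop_eq_sub_sub (hw : Continuous w) (x : ℝ) :
    Kop w x = (∫ s in (0:ℝ)..x, s * w s) - x * (∫ s in (0:ℝ)..x, w s)
      - x * ∫ s in (0:ℝ)..1, (s - 1) * w s := by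
  simp only [Kop, sub_mul, ← intervalIntegral.integral_const_mul]
  rw [intervalIntegral.integral_sub (f := fun s => s * w s) (g := fun s => x * w s)
    ((continuous_id.mul hw).intervalIntegrable _ _)
    ((continuous_const.mul hw).intervalIntegrable _ _)]

lemma hasDerivAt_Kop (hw : Continuous w) (x : ℝ) : HasDerivAt (Kop w) (KopDeriv w x) x := by
  rw [funext (Kop_eq_sub_sub hw)]
  exact ((((continuous_id.mul hw).integral_hasStrictDerivAt 0 x).hasDerivAt.sub
    ((hasDerivAt_id x).mul (hw.integral_hasStrictDerivAt 0 x).hasDerivAt)).sub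
    ((hasDerivAt_id x).mul_const _)).congr_deriv (by simp only [KopDeriv, Pi.mul_apply, id]; ring)

lemma hasDerivAt_KopDeriv (hw : Continuous w) (x : ℝ) : HasDerivAt (KopDeriv w) (-w x) x :=
  ((hw.integral_hasStrictDerivAt 0 x).hasDerivAt.neg.sub_const _)

lemma eqOn_zero_of_Kop_eqOn_zero (hw : Continuous w) (h : EqOn (Kop w) 0 (Icc 0 1)) :
    EqOn w 0 (Icc 0 1) := by
  have hK' : EqOn (KopDeriv w) 0 (Ioo 0 1) := fun x hx =>
    (hasDerivAt_Kop hw x).eq_zero_of_eqOn_zero (Icc_mem_nhds hx.1 hx.2) h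
  have hIoo : EqOn w 0 (Ioo 0 1) := fun x hx =>
    neg_eq_zero.1 ((hasDerivAt_KopDeriv hw x).eq_zero_of_eqOn_zero (Ioo_mem_nhds hx.1 hx.2) hK')
  simpa [closure_Ioo zero_ne_one] using hIoo.closure hw continuous_const

lemma eqOn_Kop_of_dirichlet (hw : Continuous w) {y y' : ℝ → ℝ}
    (hy : ∀ x ∈ Icc (0:ℝ) 1, HasDerivAt y (y' x) x)
    (hy' : ∀ x ∈ Icc (0:ℝ) 1, HasDerivAt y' (-w x) x) (h0 : y 0 = 0) (h1 : y 1 = 0) :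
    EqOn (Kop w) y (Icc 0 1) := by
  have hd := eqOn_zero_of_dirichlet_of_nonpos le_rfl (β := 0)
    (v := fun x => Kop w x - y x) (v' := fun x => KopDeriv w x - y' x)
    (fun x hx => (hasDerivAt_Kop hw x).sub (hy x hx))
    (fun x hx => ((hasDerivAt_KopDeriv hw x).sub (hy' x hx)).congr_deriv (by ring))
    (by simp [Kop_apply_zero, h0]) (by simp [Kop_apply_one, h1])
  intro x hx
  simpa [sub_eq_zero] using hd hx

end Continuous

lemma Kop_sin_mul {a : ℝ} (ha : a ≠ 0) (hsa : sin a = 0) :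
    EqOn (Kop fun x => sin (a * x)) (fun x => sin (a * x) / a ^ 2) (Icc 0 1) :=
  eqOn_Kop_of_dirichlet (by fun_prop) (y' := fun x => cos (a * x) / a)
    (fun x _ => ((hasDerivAt_sin_mul a x).div_const _).congr_deriv (by field_simp))
    (fun x _ => ((hasDerivAt_cos_mul a x).div_const _).congr_deriv (by field_simp))
    (by simp) (by simp [hsa])

lemma exists_nat_eq_of_eigenfunction {lam μ : ℝ} (hlam : 0 < lam) {u : ℝ → ℝ}
    (hu : ContinuousOn u (Icc 0 1)) (hne : ∃ x ∈ Icc (0:ℝ) 1, u x ≠ 0)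
    (heq : ∀ x ∈ Icc (0:ℝ) 1, u x - lam * Kop u x = μ * u x) :
    ∃ n : ℕ, 1 ≤ n ∧ μ = 1 - lam / ((n : ℝ) * π) ^ 2 := by
  set w : ℝ → ℝ := fun x => u (projIcc 0 1 zero_le_one x)
  have hw : Continuous w :=
    hu.comp_continuous (continuous_subtype_val.comp continuous_projIcc) fun x => (projIcc 0 1 _ x).2
  have hwu : EqOn w u (Icc 0 1) := fun x hx => by simp [w, projIcc_of_mem _ hx]
  have hKw : ∀ x ∈ Icc (0:ℝ) 1, lam * Kop w x = (1 - μ) * w x := fun x hx => by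
    rw [Kop_congr hwu hx, hwu hx]
    linarith [heq x hx]
  obtain ⟨x₀, hx₀, hux₀⟩ := hne
  have hKne : ∃ x ∈ Icc (0:ℝ) 1, Kop w x ≠ 0 := by
    by_contra! h
    exact hux₀ (hwu hx₀ ▸ eqOn_zero_of_Kop_eqOn_zero hw h hx₀)
  have hμ : 1 - μ ≠ 0 := fun hμ => by
    obtain ⟨x, hx, hKx⟩ := hKne
    exact hKx (by simpa [hμ, hlam.ne'] using hKw x hx)
  obtain ⟨n, hn, hβ⟩ := exists_eq_sq_mul_pi_sq_of_dirichlet (β := lam / (1 - μ))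
    (fun x _ => hasDerivAt_Kop hw x)
    (fun x hx => (hasDerivAt_KopDeriv hw x).congr_deriv (by field_simp; linarith [hKw x hx]))
    (Kop_apply_zero w) (Kop_apply_one w) hKne
  refine ⟨n, hn, ?_⟩
  rw [← hβ]
  field_simp
  ring

/-- For `λ > 0` and `μ ∈ ℝ`: there is a continuous not-identically-zero `u` on `[0,1]`
with `u - λ·Ku = μ·u` pointwise on `[0,1]` iff `μ = 1 - λ/(nπ)²` for some `n ≥ 1`. -/
theorem stmt_7 (lam μ : ℝ) (hlam : 0 < lam) :
    (∃ u : ℝ → ℝ, ContinuousOn u (Icc 0 1) ∧ (∃ x ∈ Icc (0:ℝ) 1, u x ≠ 0) ∧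
      ∀ x ∈ Icc (0:ℝ) 1, u x - lam * Kop u x = μ * u x) ↔
    ∃ n : ℕ, 1 ≤ n ∧ μ = 1 - lam / ((n : ℝ) * Real.pi) ^ 2 := by
  constructor
  · rintro ⟨u, hu, hne, heq⟩
    exact exists_nat_eq_of_eigenfunction hlam hu hne heq
  · rintro ⟨n, hn, rfl⟩
    have ha : (n : ℝ) * π ≠ 0 := by positivity
    refine ⟨fun x => sin (n * π * x), by fun_prop, ⟨1 / (2 * n), ⟨by positivity, ?_⟩, ?_⟩, ?_⟩
    · rw [div_le_one (by positivity)]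
      linarith [(Nat.one_le_cast (α := ℝ)).2 hn]
    · show sin (n * π * (1 / (2 * n))) ≠ 0
      rw [show (n : ℝ) * π * (1 / (2 * n)) = π / 2 by field_simp, sin_pi_div_two]
      exact one_ne_zero
    · intro x hx
      rw [Kop_sin_mul ha (sin_nat_mul_pi n) hx]
      field_simp
end

section
/- Let a : [0,1] → ℝ and w₁ : [0,1] → ℝ be continuous and D₂ ∈ ℝ. Suppose w₂ : [0,1] → ℝ is twice continuously differentiable with w₂(0) = w₂(1) = 0 and −w₂''(x) = π² w₂(x) + D₂·sin(πx) + a(x) w₁(x) sin(πx) for all x ∈ [0,1]. Then D₂ = −2 ∫₀¹ a(x) w₁(x) sin²(πx) dx. -/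
/-!
Multiply the equation by the principal eigenfunction `sin (π x)` and integrate over `[0, 1]`.
Since `sin (π x)` satisfies `-φ'' = π² φ` and both it and `w₂` vanish at the endpoints,
Lagrange's identity `∫ (w₂'' φ - w₂ φ'') = [w₂' φ - w₂ φ']₀¹` makes the left-hand side vanish,
leaving `0 = D₂ ∫ sin² (π x) + ∫ a w₁ sin² (π x)` with `∫₀¹ sin² (π x) = 1/2`.
-/

open Set Real

theorem integral_sin_pi_mul_sq : ∫ x in (0:ℝ)..1, sin (π * x) ^ 2 = 1 / 2 := by
  rw [intervalIntegral.integral_comp_mul_left (fun x => sin x ^ 2) pi_ne_zero, integral_sin_sq]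
  simp only [mul_zero, sin_zero, cos_zero, mul_one, sin_pi, cos_pi, mul_neg, neg_zero, sub_self,
    zero_add, sub_zero, smul_eq_mul, one_div]
  field_simp

theorem hasDerivAt_sin_const_mul (c x : ℝ) :
    HasDerivAt (fun x => sin (c * x)) (c * cos (c * x)) x := by
  simpa [mul_comm] using ((hasDerivAt_id x).const_mul c).sin

theorem hasDerivAt_const_mul_cos_const_mul (c x : ℝ) :
    HasDerivAt (fun x => c * cos (c * x)) (-(c ^ 2 * sin (c * x))) x := by
  have h := (((hasDerivAt_id x).const_mul c).cos).const_mul c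
  simp only [id, mul_one] at h
  exact h.congr_deriv (by ring)

theorem integral_deriv2_mul_sub_mul_deriv2 {a b : ℝ} (hab : a ≤ b)
    {u u' u'' v v' v'' : ℝ → ℝ}
    (hu : ∀ x ∈ Icc a b, HasDerivWithinAt u (u' x) (Icc a b) x)
    (hu' : ∀ x ∈ Icc a b, HasDerivWithinAt u' (u'' x) (Icc a b) x)
    (hv : ∀ x ∈ Icc a b, HasDerivWithinAt v (v' x) (Icc a b) x)
    (hv' : ∀ x ∈ Icc a b, HasDerivWithinAt v' (v'' x) (Icc a b) x)
    (hu''c : ContinuousOn u'' (Icc a b)) (hv''c : ContinuousOn v'' (Icc a b)) :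
    ∫ x in a..b, (u'' x * v x - u x * v'' x)
      = (u' b * v b - u b * v' b) - (u' a * v a - u a * v' a) := by
  have cont {f f' : ℝ → ℝ} (hf : ∀ x ∈ Icc a b, HasDerivWithinAt f (f' x) (Icc a b) x) :
      ContinuousOn f (Icc a b) := fun x hx => (hf x hx).continuousWithinAt
  refine intervalIntegral.integral_eq_sub_of_hasDeriv_right_of_le hab
    (((cont hu').mul (cont hv)).sub ((cont hu).mul (cont hv'))) (fun x hx => ?_) ?_
  · have hx' := Ioo_subset_Icc_self hx
    have hnhds := Icc_mem_nhds hx.1 hx.2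
    have hderiv := (((hu' x hx').hasDerivAt hnhds).mul ((hv x hx').hasDerivAt hnhds)).sub
      (((hu x hx').hasDerivAt hnhds).mul ((hv' x hx').hasDerivAt hnhds))
    convert hderiv.hasDerivWithinAt using 1
    ring
  · refine ContinuousOn.intervalIntegrable ?_
    rw [uIcc_of_le hab]
    exact (hu''c.mul (cont hv)).sub ((cont hu).mul hv''c)

theorem integral_deriv2_add_pi_sq_mul_sin_eq_zero {w w' w'' : ℝ → ℝ}
    (hw : ∀ x ∈ Icc (0:ℝ) 1, HasDerivWithinAt w (w' x) (Icc 0 1) x)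
    (hw' : ∀ x ∈ Icc (0:ℝ) 1, HasDerivWithinAt w' (w'' x) (Icc 0 1) x)
    (hw''c : ContinuousOn w'' (Icc 0 1)) (h0 : w 0 = 0) (h1 : w 1 = 0) :
    ∫ x in (0:ℝ)..1, (w'' x + π ^ 2 * w x) * sin (π * x) = 0 := by
  have hsin (x) (_ : x ∈ Icc (0:ℝ) 1) :=
    (hasDerivAt_sin_const_mul π x).hasDerivWithinAt (s := Icc 0 1)
  have hcos (x) (_ : x ∈ Icc (0:ℝ) 1) :=
    (hasDerivAt_const_mul_cos_const_mul π x).hasDerivWithinAt (s := Icc 0 1)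
  have hsin''c : ContinuousOn (fun x => -(π ^ 2 * sin (π * x))) (Icc 0 1) := by fun_prop
  have hlagrange :=
    integral_deriv2_mul_sub_mul_deriv2 zero_le_one hw hw' hsin hcos hw''c hsin''c
  simp only [h0, h1, mul_zero, mul_one, sin_zero, sin_pi, zero_mul, sub_zero] at hlagrange
  rw [← hlagrange]
  congr 1 with x
  ring

theorem stmt_10_general (a w₁ : ℝ → ℝ) (D₂ : ℝ)
    (w₂ w₂' w₂'' : ℝ → ℝ)
    (hw₂' : ∀ x ∈ Icc (0:ℝ) 1, HasDerivWithinAt w₂ (w₂' x) (Icc 0 1) x)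
    (hw₂'' : ∀ x ∈ Icc (0:ℝ) 1, HasDerivWithinAt w₂' (w₂'' x) (Icc 0 1) x)
    (hcont : ContinuousOn w₂'' (Icc 0 1))
    (h0 : w₂ 0 = 0) (h1 : w₂ 1 = 0)
    (heq : ∀ x ∈ Icc (0:ℝ) 1,
      -(w₂'' x) = Real.pi ^ 2 * w₂ x + D₂ * Real.sin (Real.pi * x)
        + a x * w₁ x * Real.sin (Real.pi * x)) :
    D₂ = -2 * ∫ x in (0:ℝ)..1, a x * w₁ x * Real.sin (Real.pi * x) ^ 2 := by
  set g := fun x => (w₂'' x + π ^ 2 * w₂ x) * sin (π * x)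
  have hg : EqOn (fun x => a x * w₁ x * sin (π * x) ^ 2)
      (fun x => -(D₂ * sin (π * x) ^ 2) - g x) (uIcc 0 1) := by
    intro x hx
    rw [uIcc_of_le zero_le_one] at hx
    linear_combination (-sin (π * x)) * heq x hx
  have hw₂c : ContinuousOn w₂ (Icc 0 1) := fun x hx => (hw₂' x hx).continuousWithinAt
  have hgint : IntervalIntegrable g MeasureTheory.volume 0 1 := by
    refine ContinuousOn.intervalIntegrable ?_
    rw [uIcc_of_le zero_le_one]
    fun_prop
  rw [intervalIntegral.integral_congr hg, intervalIntegral.integral_sub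
    (Continuous.intervalIntegrable (by fun_prop) _ _) hgint,
    intervalIntegral.integral_neg, intervalIntegral.integral_const_mul, integral_sin_pi_mul_sq,
    integral_deriv2_add_pi_sq_mul_sin_eq_zero hw₂' hw₂'' hcont h0 h1]
  ring

/-- If `w₂` is twice continuously differentiable on `[0,1]` with `w₂ 0 = w₂ 1 = 0` and
`-w₂'' = π² w₂ + D₂ sin(πx) + a(x) w₁(x) sin(πx)` on `[0,1]`, then
`D₂ = -2 ∫₀¹ a(x) w₁(x) sin²(πx) dx`. -/
theorem stmt_10 (a w₁ : ℝ → ℝ)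
    (ha : ContinuousOn a (Icc 0 1)) (hw₁ : ContinuousOn w₁ (Icc 0 1)) (D₂ : ℝ)
    (w₂ w₂' w₂'' : ℝ → ℝ)
    (hw₂' : ∀ x ∈ Icc (0:ℝ) 1, HasDerivWithinAt w₂ (w₂' x) (Icc 0 1) x)
    (hw₂'' : ∀ x ∈ Icc (0:ℝ) 1, HasDerivWithinAt w₂' (w₂'' x) (Icc 0 1) x)
    (hcont : ContinuousOn w₂'' (Icc 0 1))
    (h0 : w₂ 0 = 0) (h1 : w₂ 1 = 0)
    (heq : ∀ x ∈ Icc (0:ℝ) 1,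
      -(w₂'' x) = Real.pi ^ 2 * w₂ x + D₂ * Real.sin (Real.pi * x)
        + a x * w₁ x * Real.sin (Real.pi * x)) :
    D₂ = -2 * ∫ x in (0:ℝ)..1, a x * w₁ x * Real.sin (Real.pi * x) ^ 2 :=
  stmt_10_general a w₁ D₂ w₂ w₂' w₂'' hw₂' hw₂'' hcont h0 h1 heq
end

section
/- Let a(x) = sin(5πx) and define w̃(x) = (1/π) ∫₀ˣ sin(5πs) sin²(πs) sin(πs − πx) ds for x ∈ [0,1]. Then −2 ∫₀¹ sin(5πx) w̃(x) sin²(πx) dx = −5/(256π²). -/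
/-- The particular corrector for the weight `a(x) = sin(5πx)`:
`w̃(x) = (1/π) ∫₀ˣ sin(5πs) sin²(πs) sin(πs − πx) ds`. -/
noncomputable def wTilde5 (x : ℝ) : ℝ :=
  (1 / Real.pi) * ∫ s in (0:ℝ)..x,
    Real.sin (5 * Real.pi * s) * Real.sin (Real.pi * s) ^ 2
      * Real.sin (Real.pi * s - Real.pi * x)

/-!
If `a(x) sin²(πx) = ∑ cᵢ sin(νᵢπx)` with distinct frequencies `νᵢ ≥ 2`, Duhamel's formula
gives each mode of the corrector explicitly: `(sin(νπx) - ν sin(πx)) / (π²(ν² - 1))`.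
By orthogonality of the `sin(nπx)` on `[0, 1]` the `sin(πx)` parts drop out and
`∫₀¹ a w̃ sin²(πx) = ∑ cᵢ² / (νᵢ² - 1) / (2π²)`. For `a(x) = sin(5πx)` one has
`sin 5t sin² t = -¼ sin 3t + ½ sin 5t - ¼ sin 7t`, and the sum is
`1/128 + 1/96 + 1/768 = 5/256`.
-/

open Real Finset

theorem mul_integral_sin_mul_sin_sub (a b q u v : ℝ) :
    (a ^ 2 - b ^ 2) * ∫ x in u..v, sin (a * x) * sin (b * x - q) =
      (b * sin (a * v) * cos (b * v - q) - a * cos (a * v) * sin (b * v - q)) -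
        (b * sin (a * u) * cos (b * u - q) - a * cos (a * u) * sin (b * u - q)) := by
  rw [← intervalIntegral.integral_const_mul]
  apply intervalIntegral.integral_eq_sub_of_hasDerivAt
  · intro x _
    have hax : HasDerivAt (fun x => a * x) a x := by
      simpa using (hasDerivAt_id x).const_mul a
    have hbx : HasDerivAt (fun x => b * x - q) b x := by
      simpa using ((hasDerivAt_id x).const_mul b).sub_const q
    convert ((hax.sin.const_mul b).mul hbx.cos).sub ((hax.cos.const_mul a).mul hbx.sin) using 1
    · rfl
    · ring
  · exact Continuous.intervalIntegrable (by fun_prop) _ _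

theorem integral_sin_nat_mul_pi_mul_sin (m : ℕ) {n : ℕ} (hn : n ≠ 0) :
    ∫ x in (0:ℝ)..1, sin (m * π * x) * sin (n * π * x) = if m = n then 1 / 2 else 0 := by
  split_ifs with hmn
  · subst hmn
    have hmπ : (m : ℝ) * π ≠ 0 := by positivity
    simp_rw [← sq]
    rw [intervalIntegral.integral_comp_mul_left (fun x => sin x ^ 2) hmπ, integral_sin_sq]
    simp only [mul_zero, mul_one, sin_zero, sin_nat_mul_pi, zero_mul, sub_zero, zero_add,
      smul_eq_mul]
    field_simp
  · have hsq : ((m : ℝ) * π) ^ 2 - ((n : ℝ) * π) ^ 2 ≠ 0 := by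
      rw [mul_pow, mul_pow, ← sub_mul]
      refine mul_ne_zero (sub_ne_zero.2 fun h => hmn ?_) (by positivity)
      exact_mod_cast (sq_eq_sq₀ (by positivity) (by positivity)).1 h
    have h := mul_integral_sin_mul_sin_sub (m * π) (n * π) 0 0 1
    simp only [sub_zero, mul_zero, mul_one, sin_zero, sin_nat_mul_pi] at h
    simpa [hsq] using h

theorem integral_sum_sin_mul_sin {ι : Type*} [Fintype ι] (c : ι → ℝ) (ν : ι → ℕ) {n : ℕ}
    (hn : n ≠ 0) :
    ∫ x in (0:ℝ)..1, (∑ i, c i * sin (ν i * π * x)) * sin (n * π * x) =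
      (∑ i with ν i = n, c i) / 2 := by
  simp_rw [sum_mul, mul_assoc (c _)]
  rw [intervalIntegral.integral_finsetSum fun i _ =>
    Continuous.intervalIntegrable (by fun_prop) _ _]
  simp [intervalIntegral.integral_const_mul, integral_sin_nat_mul_pi_mul_sin _ hn, sum_filter,
    div_eq_mul_inv, sum_mul, ite_mul]

/-- Duhamel's formula: `corrector a` solves `-w'' = π² w + a(x) sin²(πx)` with
`w(0) = w'(0) = 0`. -/
noncomputable def corrector (a : ℝ → ℝ) (x : ℝ) : ℝ :=
  (1 / π) * ∫ s in (0:ℝ)..x, a s * sin (π * s) ^ 2 * sin (π * s - π * x)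

theorem wTilde5_eq_corrector : wTilde5 = corrector fun x => sin (5 * π * x) := rfl

theorem corrector_eq_sum {ι : Type*} [Fintype ι] {a : ℝ → ℝ} {c ν : ι → ℝ}
    (ha : ∀ x, a x * sin (π * x) ^ 2 = ∑ i, c i * sin (ν i * π * x)) (hν : ∀ i, ν i ^ 2 ≠ 1)
    (x : ℝ) :
    corrector a x =
      ∑ i, c i / (π ^ 2 * (ν i ^ 2 - 1)) * (sin (ν i * π * x) - ν i * sin (π * x)) := by
  simp_rw [corrector, ha, sum_mul, mul_assoc (c _)]
  rw [intervalIntegral.integral_finsetSum fun i _ =>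
    Continuous.intervalIntegrable (by fun_prop) _ _, mul_sum]
  refine sum_congr rfl fun i _ => ?_
  have hD : ((ν i * π) ^ 2 - π ^ 2) ≠ 0 := by
    rw [mul_pow, ← sub_one_mul]
    exact mul_ne_zero (sub_ne_zero.2 (hν i)) (by positivity)
  have h := mul_integral_sin_mul_sin_sub (ν i * π) π (π * x) 0 x
  simp only [sub_self, mul_zero, zero_sub, sin_zero, cos_zero, sin_neg] at h
  have hI : ∫ s in (0:ℝ)..x, sin (ν i * π * s) * sin (π * s - π * x) =
      π * (sin (ν i * π * x) - ν i * sin (π * x)) / ((ν i * π) ^ 2 - π ^ 2) := by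
    rw [eq_div_iff hD, mul_comm, h]
    ring
  rw [intervalIntegral.integral_const_mul, hI]
  field_simp

theorem integral_mul_corrector_mul_sin_sq {ι : Type*} [Fintype ι] {a : ℝ → ℝ} {c : ι → ℝ}
    {ν : ι → ℕ} (hν : Function.Injective ν) (hν₂ : ∀ i, 2 ≤ ν i)
    (ha : ∀ x, a x * sin (π * x) ^ 2 = ∑ i, c i * sin (ν i * π * x)) :
    ∫ x in (0:ℝ)..1, a x * corrector a x * sin (π * x) ^ 2 =
      (∑ i, c i ^ 2 / (ν i ^ 2 - 1)) / (2 * π ^ 2) := by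
  have hν₁ : ∀ i, (ν i : ℝ) ^ 2 ≠ 1 := fun i => by
    have : (2 : ℝ) ≤ ν i := by exact_mod_cast hν₂ i
    nlinarith
  set S : ℝ → ℝ := fun x => ∑ i, c i * sin (ν i * π * x)
  have hS : ∀ j, ∫ x in (0:ℝ)..1, S x * sin (ν j * π * x) = c j / 2 := fun j => by
    rw [integral_sum_sin_mul_sin c ν (by have := hν₂ j; omega), sum_filter,
      sum_eq_single_of_mem j (mem_univ j) fun i _ hij => if_neg (hν.ne hij), if_pos rfl]
  have hS₁ : ∫ x in (0:ℝ)..1, S x * sin (π * x) = 0 := by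
    have := integral_sum_sin_mul_sin c ν one_ne_zero
    simp only [Nat.cast_one, one_mul] at this
    rw [this, filter_false_of_mem fun i _ => by have := hν₂ i; omega]
    simp
  have hpoint : ∀ x, a x * corrector a x * sin (π * x) ^ 2 =
      ∑ j, c j / (π ^ 2 * (ν j ^ 2 - 1)) *
        (S x * sin (ν j * π * x) - ν j * (S x * sin (π * x))) := fun x => by
    rw [mul_right_comm, ha, corrector_eq_sum ha hν₁, mul_sum]
    exact sum_congr rfl fun j _ => by ring
  simp_rw [hpoint]
  rw [intervalIntegral.integral_finsetSum fun i _ =>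
    Continuous.intervalIntegrable (by fun_prop) _ _, sum_div]
  refine sum_congr rfl fun j _ => ?_
  rw [intervalIntegral.integral_const_mul,
    intervalIntegral.integral_sub (Continuous.intervalIntegrable (by fun_prop) _ _)
      (Continuous.intervalIntegrable (by fun_prop) _ _),
    intervalIntegral.integral_const_mul, hS, hS₁, mul_zero, sub_zero]
  field_simp

theorem sin_five_mul_mul_sin_sq (t : ℝ) :
    sin (5 * t) * sin t ^ 2 =
      -(1 / 4) * sin (3 * t) + 1 / 2 * sin (5 * t) - 1 / 4 * sin (7 * t) := by
  rw [show 3 * t = 5 * t - 2 * t by ring, show 7 * t = 5 * t + 2 * t by ring, sin_sub, sin_add,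
    cos_two_mul, cos_sq']
  ring

/-- For `a(x) = sin(5πx)`: `-2 ∫₀¹ sin(5πx) w̃(x) sin²(πx) dx = -5/(256π²)`. -/
theorem stmt_15 :
    -2 * ∫ x in (0:ℝ)..1,
        Real.sin (5 * Real.pi * x) * wTilde5 x * Real.sin (Real.pi * x) ^ 2
      = -(5 / (256 * Real.pi ^ 2)) := by
  have ha : ∀ x, sin (5 * π * x) * sin (π * x) ^ 2 =
      ∑ i, ![-(1 / 4), 1 / 2, -(1 / 4)] i * sin ((![3, 5, 7] i : ℕ) * π * x) := fun x => by
    have := sin_five_mul_mul_sin_sq (π * x)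
    simp only [← mul_assoc] at this
    simp only [Fin.sum_univ_three, Matrix.cons_val_zero, Matrix.cons_val_one, Matrix.cons_val,
      Nat.cast_ofNat]
    linear_combination this
  rw [wTilde5_eq_corrector, integral_mul_corrector_mul_sin_sq (by decide) (by decide) ha]
  simp only [Fin.sum_univ_three, Matrix.cons_val_zero, Matrix.cons_val_one, Matrix.cons_val]
  field_simp
  norm_num
end

section
/- Let α < β be real numbers, λ ∈ ℝ, and ω < 0. Suppose L : [α,β] → ℝ is twice continuously differentiable with L(x) > 0 for all x ∈ [α,β] and −L''(x) = λ L(x) + ω L(x)² for all x ∈ [α,β]. Let φ(x) = sin(π(x − α)/(β − α)). Then ((π/(β − α))² − λ) ∫_α^β L(x) φ(x) dx < (π/(β − α)) (L(α) + L(β)). -/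
open Set Real intervalIntegral MeasureTheory

/-! With `k = π/(β−α)` and `φ(x) = sin(k(x−α))`, so that `φ'' = −k²φ`, Green's identity
`∫ (L''φ − Lφ'') = [L'φ − Lφ']_α^β` and the equation for `L` give
`(k² − λ) ∫ Lφ − ω ∫ L²φ = k (L(α) + L(β))`; the term `ω ∫ L²φ` is negative since `ω < 0` and
`L²φ > 0` on `(α, β)`. -/

theorem integral_deriv2_mul_sub_mul_deriv2_s18 {a b : ℝ} (hab : a ≤ b) {f f' f'' g g' g'' : ℝ → ℝ}
    (hf : ∀ x ∈ Icc a b, HasDerivWithinAt f (f' x) (Icc a b) x)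
    (hf' : ∀ x ∈ Icc a b, HasDerivWithinAt f' (f'' x) (Icc a b) x)
    (hg : ∀ x ∈ Icc a b, HasDerivWithinAt g (g' x) (Icc a b) x)
    (hg' : ∀ x ∈ Icc a b, HasDerivWithinAt g' (g'' x) (Icc a b) x)
    (hint : IntervalIntegrable (fun x => f'' x * g x - f x * g'' x) volume a b) :
    ∫ x in a..b, (f'' x * g x - f x * g'' x) =
      (f' b * g b - f b * g' b) - (f' a * g a - f a * g' a) := by
  have hW : ∀ x ∈ Icc a b, HasDerivWithinAt (fun x => f' x * g x - f x * g' x)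
      (f'' x * g x - f x * g'' x) (Icc a b) x := fun x hx =>
    (((hf' x hx).mul (hg x hx)).sub ((hf x hx).mul (hg' x hx))).congr_deriv (by ring)
  refine integral_eq_sub_of_hasDerivAt_of_le hab (fun x hx => (hW x hx).continuousWithinAt)
    (fun x hx => ?_) hint
  exact (hW x (Ioo_subset_Icc_self hx)).hasDerivAt (Icc_mem_nhds hx.1 hx.2)

theorem hasDerivAt_sin_mul_sub (k c x : ℝ) :
    HasDerivAt (fun x => sin (k * (x - c))) (k * cos (k * (x - c))) x := by
  simpa [mul_comm] using (((hasDerivAt_id x).sub_const c).const_mul k).sin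

theorem hasDerivAt_mul_cos_mul_sub (k c x : ℝ) :
    HasDerivAt (fun x => k * cos (k * (x - c))) (-(k ^ 2 * sin (k * (x - c)))) x := by
  have h := ((((hasDerivAt_id x).sub_const c).const_mul k).cos).const_mul k
  exact h.congr_deriv (by simp only [id]; ring)

theorem sin_mul_sub_pos {α β k x : ℝ} (hk : k * (β - α) = π) (hx : x ∈ Ioo α β) :
    0 < sin (k * (x - α)) := by
  have hk0 : 0 < k := pos_of_mul_pos_left (hk ▸ pi_pos) (sub_pos.2 (hx.1.trans hx.2)).le
  refine sin_pos_of_pos_of_lt_pi (mul_pos hk0 (sub_pos.2 hx.1)) ?_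
  calc k * (x - α) < k * (β - α) := by gcongr; exact hx.2
    _ = π := hk

theorem integral_mul_sin_mul_sub_of_deriv2 {α β lam ω k : ℝ} (hab : α ≤ β) (hk : k * (β - α) = π)
    {L L' L'' : ℝ → ℝ}
    (hL' : ∀ x ∈ Icc α β, HasDerivWithinAt L (L' x) (Icc α β) x)
    (hL'' : ∀ x ∈ Icc α β, HasDerivWithinAt L' (L'' x) (Icc α β) x)
    (heq : ∀ x ∈ Icc α β, -(L'' x) = lam * L x + ω * L x ^ 2) :
    (k ^ 2 - lam) * (∫ x in α..β, L x * sin (k * (x - α)))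
      - ω * ∫ x in α..β, L x ^ 2 * sin (k * (x - α)) = k * (L α + L β) := by
  have hL : ContinuousOn L (Icc α β) := fun x hx => (hL' x hx).continuousWithinAt
  have hφ : Continuous fun x => sin (k * (x - α)) := by fun_prop
  have hint₁ : IntervalIntegrable (fun x => L x * sin (k * (x - α))) volume α β :=
    (hL.mul hφ.continuousOn).intervalIntegrable_of_Icc hab
  have hint₂ : IntervalIntegrable (fun x => L x ^ 2 * sin (k * (x - α))) volume α β :=
    ((hL.pow 2).mul hφ.continuousOn).intervalIntegrable_of_Icc hab
  have hintegrand : EqOn (fun x => L'' x * sin (k * (x - α)) - L x * -(k ^ 2 * sin (k * (x - α))))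
      (fun x => (k ^ 2 - lam) * (L x * sin (k * (x - α))) - ω * (L x ^ 2 * sin (k * (x - α))))
      (uIcc α β) := by
    intro x hx
    rw [uIcc_of_le hab] at hx
    linear_combination (-sin (k * (x - α))) * heq x hx
  have hgreen := integral_deriv2_mul_sub_mul_deriv2_s18 hab hL' hL''
    (fun x _ => (hasDerivAt_sin_mul_sub k α x).hasDerivWithinAt)
    (fun x _ => (hasDerivAt_mul_cos_mul_sub k α x).hasDerivWithinAt)
    (((hint₁.const_mul _).sub (hint₂.const_mul _)).congr (hintegrand.symm.mono uIoc_subset_uIcc))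
  rw [integral_congr hintegrand, integral_sub (hint₁.const_mul _) (hint₂.const_mul _),
    intervalIntegral.integral_const_mul, intervalIntegral.integral_const_mul] at hgreen
  rw [hgreen, hk]
  simp only [sub_self, mul_zero, sin_zero, cos_zero, sin_pi, cos_pi]
  ring

theorem stmt_18_general (α β lam ω : ℝ) (hab : α < β) (hω : ω < 0)
    (L L' L'' : ℝ → ℝ)
    (hL' : ∀ x ∈ Icc α β, HasDerivWithinAt L (L' x) (Icc α β) x)
    (hL'' : ∀ x ∈ Icc α β, HasDerivWithinAt L' (L'' x) (Icc α β) x)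
    (hpos : ∀ x ∈ Icc α β, 0 < L x)
    (heq : ∀ x ∈ Icc α β, -(L'' x) = lam * L x + ω * L x ^ 2) :
    ((Real.pi / (β - α)) ^ 2 - lam)
        * ∫ x in α..β, L x * Real.sin (Real.pi * (x - α) / (β - α))
      < (Real.pi / (β - α)) * (L α + L β) := by
  have hk : π / (β - α) * (β - α) = π := div_mul_cancel₀ _ (sub_pos.2 hab).ne'
  have hidentity := integral_mul_sin_mul_sub_of_deriv2 hab.le hk hL' hL'' heq
  have hL : ContinuousOn L (Icc α β) := fun x hx => (hL' x hx).continuousWithinAt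
  have hsq : 0 < ∫ x in α..β, L x ^ 2 * sin (π / (β - α) * (x - α)) := by
    refine intervalIntegral_pos_of_pos_on ?_ (fun x hx => ?_) hab
    · exact ((hL.pow 2).mul (by fun_prop)).intervalIntegrable_of_Icc hab.le
    · exact mul_pos (pow_pos (hpos x (Ioo_subset_Icc_self hx)) 2) (sin_mul_sub_pos hk hx)
  simp_rw [mul_div_right_comm π]
  linarith [mul_neg_of_neg_of_pos hω hsq]

/-- For `α < β`, `ω < 0`, and a positive twice continuously differentiable solution `L` of
`-L'' = λL + ωL²` on `[α,β]`, with `φ(x) = sin(π(x−α)/(β−α))`: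
`((π/(β−α))² − λ) ∫_α^β L φ < (π/(β−α)) (L(α) + L(β))`. -/
theorem stmt_18 (α β lam ω : ℝ) (hab : α < β) (hω : ω < 0)
    (L L' L'' : ℝ → ℝ)
    (hL' : ∀ x ∈ Icc α β, HasDerivWithinAt L (L' x) (Icc α β) x)
    (hL'' : ∀ x ∈ Icc α β, HasDerivWithinAt L' (L'' x) (Icc α β) x)
    (hcont : ContinuousOn L'' (Icc α β))
    (hpos : ∀ x ∈ Icc α β, 0 < L x)
    (heq : ∀ x ∈ Icc α β, -(L'' x) = lam * L x + ω * L x ^ 2) :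
    ((Real.pi / (β - α)) ^ 2 - lam)
        * ∫ x in α..β, L x * Real.sin (Real.pi * (x - α) / (β - α))
      < (Real.pi / (β - α)) * (L α + L β) :=
  stmt_18_general α β lam ω hab hω L L' L'' hL' hL'' hpos heq
end
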